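/- arXiv:2506.22049 — 7 statements merged into one kernel-verified Lean document; each statement's English description precedes it below -/
import Mathlib

section
/- Let (σ_ℓ)_{ℓ≥1} be a GPAS variance sequence with gate parameters (α_ℓ) and scaling factors β_ℓ = 1 − SiLU(α_ℓ) > 0. Then for every ℓ ≥ 1 the variance lower bound holds: log σ_ℓ² ≥ log σ_1² + ∑_{k=1}^{ℓ−1} ( 1/(σ_k + 1) + log β_k ). -/
/-!
Taking logarithms turns the recursion into `log σ_{ℓ+1}² = log σ_ℓ² + log (1 + 1/σ_ℓ) + log β_ℓ`,
and `log (1 + 1/x) ≥ 1/(x + 1)` is `log y ≥ 1 - 1/y` at `y = 1 + 1/x`. Summing the one-step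
bounds telescopes to the claim.
-/

noncomputable def SiLU (x : ℝ) : ℝ := x / (1 + Real.exp (-x))

open Finset Real

theorem add_sum_range_le_of_add_le_succ {u c : ℕ → ℝ} (h : ∀ k, u k + c k ≤ u (k + 1)) (n : ℕ) :
    u 0 + ∑ k ∈ range n, c k ≤ u n := by
  have hsum : ∑ k ∈ range n, c k ≤ ∑ k ∈ range n, (u (k + 1) - u k) :=
    sum_le_sum fun k _ => by linarith [h k]
  rw [sum_range_sub] at hsum
  linarith

theorem one_div_add_one_le_log_one_add_one_div {x : ℝ} (hx : 0 < x) :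
    1 / (x + 1) ≤ log (1 + 1 / x) := by
  have hy : 0 < 1 + 1 / x := by positivity
  calc 1 / (x + 1) = 1 - (1 + 1 / x)⁻¹ := by field_simp; ring
    _ ≤ log (1 + 1 / x) := one_sub_inv_le_log_of_pos hy

theorem log_sq_add_le_log_sq_mul_one_add_one_div_mul {s b : ℝ} (hs : 0 < s) (hb : 0 < b) :
    log (s ^ 2) + (1 / (s + 1) + log b) ≤ log (s ^ 2 * (1 + 1 / s) * b) := by
  rw [log_mul (by positivity) hb.ne', log_mul (by positivity) (by positivity)]
  linarith [one_div_add_one_le_log_one_add_one_div hs]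

/-- Layers are indexed from `0`: `σ 0` is the paper's `σ_1`. -/
theorem gpas_variance_lower_bound
    (σ α : ℕ → ℝ)
    (hσ : ∀ ℓ, 0 < σ ℓ)
    (hβ : ∀ ℓ, 0 < 1 - SiLU (α ℓ))
    (hrec : ∀ ℓ, (σ (ℓ + 1)) ^ 2 = (σ ℓ) ^ 2 * (1 + 1 / σ ℓ) * (1 - SiLU (α ℓ))) :
    ∀ ℓ : ℕ, Real.log ((σ ℓ) ^ 2) ≥
      Real.log ((σ 0) ^ 2) +
        ∑ k ∈ Finset.range ℓ,
          (1 / (σ k + 1) + Real.log (1 - SiLU (α k))) :=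
  add_sum_range_le_of_add_le_succ (u := fun k => log (σ k ^ 2)) fun k => by
    rw [hrec k]
    exact log_sq_add_le_log_sq_mul_one_add_one_div_mul (hσ k) (hβ k)
end

section
/- Let (σ_ℓ)_{ℓ≥1} be a GPAS variance sequence with gate parameters (α_ℓ) and scaling factors β_ℓ = 1 − SiLU(α_ℓ) > 0. Then for every ℓ ≥ 1 the variance upper bound holds: log σ_ℓ² ≤ log σ_1² + ∑_{k=1}^{ℓ−1} ( 1/σ_k + log β_k ). -/
/-- For a GPAS variance sequence `σ` (here `σ 0 = σ_1`, `σ k = σ_{k+1}`) with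
gate parameters `α` and scaling factors `β ℓ = 1 − SiLU (α ℓ) > 0` satisfying the recursion
`σ_{ℓ+1}² = σ_ℓ² (1 + 1/σ_ℓ) β_ℓ`, the variance upper bound holds for every layer:
`log σ_ℓ² ≤ log σ_1² + ∑_{k=1}^{ℓ−1} (1/σ_k + log β_k)`. -/
theorem gpas_variance_upper_bound
    (σ α : ℕ → ℝ)
    (hσ : ∀ ℓ, 0 < σ ℓ)
    (hβ : ∀ ℓ, 0 < 1 - SiLU (α ℓ))
    (hrec : ∀ ℓ, (σ (ℓ + 1)) ^ 2 = (σ ℓ) ^ 2 * (1 + 1 / σ ℓ) * (1 - SiLU (α ℓ))) :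
    ∀ ℓ : ℕ, Real.log ((σ ℓ) ^ 2) ≤
      Real.log ((σ 0) ^ 2) +
        ∑ k ∈ Finset.range ℓ,
          (1 / σ k + Real.log (1 - SiLU (α k))) := by
  intro ℓ
  induction ℓ with
  | zero => simp
  | succ n ih =>
    rw [Finset.sum_range_succ, hrec n]
    have hs := hσ n
    have h1 : 0 < (σ n) ^ 2 := by positivity
    have h2 : 0 < 1 + 1 / σ n := by positivity
    rw [Real.log_mul (mul_pos h1 h2).ne' (hβ n).ne', Real.log_mul h1.ne' h2.ne']
    have hlog : Real.log (1 + 1 / σ n) ≤ 1 / σ n := by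
      have := Real.add_one_le_exp (1 / σ n)
      calc Real.log (1 + 1 / σ n) ≤ Real.log (Real.exp (1 / σ n)) := by
            apply Real.log_le_log h2; linarith
        _ = 1 / σ n := Real.log_exp _
    linarith
end

section
/- Let (σ_ℓ)_{ℓ≥1} be a GPAS variance sequence with gate parameters (α_ℓ) and scaling factors β_ℓ = 1 − SiLU(α_ℓ) > 0, and define S_ℓ := ∑_{k=1}^{ℓ−1} ( 1/(σ_k + 1) + log β_k ). Then for every ℓ ≥ 1, the reciprocal bounds hold: 1/σ_ℓ ≤ (1/σ_1) · exp(−S_ℓ/2) and 1/σ_ℓ² ≤ (1/σ_1²) · exp(−S_ℓ). -/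
/-!
Since `exp (1/(x+1)) ≤ 1 + 1/x` for `x > 0` (the bound `exp t ≤ 1/(1 - t)` at `t = 1/(x+1)`), the
recursion gives `σ_{ℓ+1}² ≥ σ_ℓ² · exp (1/(σ_ℓ + 1) + log β_ℓ)`. Telescoping yields
`σ_ℓ² ≥ σ_1² · exp S_ℓ`, and taking reciprocals (and square roots) gives both bounds.
-/

open Real Finset

lemma Real.exp_one_div_add_one_le_one_add_one_div {x : ℝ} (hx : 0 < x) :
    exp (1 / (x + 1)) ≤ 1 + 1 / x := by
  have hbound := exp_bound_div_one_sub_of_interval (x := 1 / (x + 1)) (by positivity)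
    ((div_lt_one (by positivity)).2 (by linarith))
  convert hbound using 1
  field_simp [hx.ne']
  ring

lemma mul_exp_sum_le_of_mul_exp_le_succ {u c : ℕ → ℝ} (hstep : ∀ n, u n * exp (c n) ≤ u (n + 1))
    (n : ℕ) : u 0 * exp (∑ k ∈ range n, c k) ≤ u n := by
  induction n with
  | zero => simp
  | succ n ih =>
    calc u 0 * exp (∑ k ∈ range (n + 1), c k) = u 0 * exp (∑ k ∈ range n, c k) * exp (c n) := by
          rw [sum_range_succ, exp_add, mul_assoc]
      _ ≤ u n * exp (c n) := by gcongr
      _ ≤ u (n + 1) := hstep n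

lemma one_div_le_one_div_mul_exp_neg {a b s : ℝ} (ha : 0 < a) (hab : a * exp s ≤ b) :
    1 / b ≤ 1 / a * exp (-s) := by
  calc 1 / b ≤ 1 / (a * exp s) := one_div_le_one_div_of_le (by positivity) hab
    _ = 1 / a * exp (-s) := by rw [exp_neg]; field_simp

/-- For a GPAS variance sequence `σ` (here `σ 0 = σ_1`, `σ k = σ_{k+1}`) with
gate parameters `α`, scaling factors `β ℓ = 1 − SiLU (α ℓ) > 0` and
`S_ℓ = ∑_{k=1}^{ℓ−1} (1/(σ_k + 1) + log β_k)`, the reciprocal bounds hold for every layer: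
`1/σ_ℓ ≤ (1/σ_1) exp (−S_ℓ/2)` and `1/σ_ℓ² ≤ (1/σ_1²) exp (−S_ℓ)`. -/
theorem gpas_reciprocal_upper_bounds
    (σ α : ℕ → ℝ)
    (hσ : ∀ ℓ, 0 < σ ℓ)
    (hβ : ∀ ℓ, 0 < 1 - SiLU (α ℓ))
    (hrec : ∀ ℓ, (σ (ℓ + 1)) ^ 2 = (σ ℓ) ^ 2 * (1 + 1 / σ ℓ) * (1 - SiLU (α ℓ)))
    (S : ℕ → ℝ)
    (hS : ∀ ℓ, S ℓ = ∑ k ∈ Finset.range ℓ,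
      (1 / (σ k + 1) + Real.log (1 - SiLU (α k)))) :
    ∀ ℓ : ℕ,
      1 / σ ℓ ≤ (1 / σ 0) * Real.exp (-(S ℓ) / 2) ∧
        1 / (σ ℓ) ^ 2 ≤ (1 / (σ 0) ^ 2) * Real.exp (-(S ℓ)) := by
  have hstep : ∀ n, σ n ^ 2 * exp (1 / (σ n + 1) + log (1 - SiLU (α n))) ≤ σ (n + 1) ^ 2 := by
    intro n
    rw [hrec, exp_add, exp_log (hβ n), ← mul_assoc]
    gcongr
    · exact (hβ n).le
    · exact exp_one_div_add_one_le_one_add_one_div (hσ n)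
  intro ℓ
  have hsq : σ 0 ^ 2 * exp (S ℓ) ≤ σ ℓ ^ 2 := hS ℓ ▸ mul_exp_sum_le_of_mul_exp_le_succ hstep ℓ
  have hroot : σ 0 * exp (S ℓ / 2) ≤ σ ℓ := by
    refine (pow_le_pow_iff_left₀ (mul_pos (hσ 0) (exp_pos _)).le (hσ ℓ).le two_ne_zero).1 ?_
    rwa [mul_pow, ← exp_nat_mul, Nat.cast_ofNat, mul_div_cancel₀ _ two_ne_zero]
  constructor
  · simpa [neg_div] using one_div_le_one_div_mul_exp_neg (hσ 0) hroot
  · exact one_div_le_one_div_mul_exp_neg (pow_pos (hσ 0) 2) hsq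
end

section
/- Let (σ_ℓ)_{ℓ≥1} be a GPAS variance sequence with gate parameters (α_ℓ) and scaling factors β_ℓ = 1 − SiLU(α_ℓ) > 0, and define T_ℓ := ∑_{k=1}^{ℓ−1} ( 1/σ_k + log β_k ). Then for every ℓ ≥ 1, the reciprocal lower bound holds: 1/σ_ℓ ≥ (1/σ_1) · exp(−T_ℓ/2). -/
/-- For a GPAS variance sequence `σ` (here `σ 0 = σ_1`, `σ k = σ_{k+1}`) with
gate parameters `α`, scaling factors `β ℓ = 1 − SiLU (α ℓ) > 0` and
`T_ℓ = ∑_{k=1}^{ℓ−1} (1/σ_k + log β_k)`, the reciprocal lower bound holds for every layer: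
`1/σ_ℓ ≥ (1/σ_1) exp (−T_ℓ/2)`. -/
theorem gpas_reciprocal_lower_bound
    (σ α : ℕ → ℝ)
    (hσ : ∀ ℓ, 0 < σ ℓ)
    (hβ : ∀ ℓ, 0 < 1 - SiLU (α ℓ))
    (hrec : ∀ ℓ, (σ (ℓ + 1)) ^ 2 = (σ ℓ) ^ 2 * (1 + 1 / σ ℓ) * (1 - SiLU (α ℓ)))
    (T : ℕ → ℝ)
    (hT : ∀ ℓ, T ℓ = ∑ k ∈ Finset.range ℓ,
      (1 / σ k + Real.log (1 - SiLU (α k)))) :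
    ∀ ℓ : ℕ, 1 / σ ℓ ≥ (1 / σ 0) * Real.exp (-(T ℓ) / 2) := by
  have key : ∀ ℓ : ℕ, (σ ℓ) ^ 2 ≤ (σ 0) ^ 2 * Real.exp (T ℓ) := by
    intro ℓ
    induction ℓ with
    | zero => simp [hT]
    | succ n ih =>
      have hTn : T (n + 1) = T n + (1 / σ n + Real.log (1 - SiLU (α n))) := by
        rw [hT, hT, Finset.sum_range_succ]
      have hβn := hβ n
      have h1 : (1 : ℝ) + 1 / σ n ≤ Real.exp (1 / σ n) := by
        have := Real.add_one_le_exp (1 / σ n); linarith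
      have h2 : (1 : ℝ) - SiLU (α n) = Real.exp (Real.log (1 - SiLU (α n))) :=
        (Real.exp_log hβn).symm
      have hσn := hσ n
      have hpos : (0:ℝ) < 1 + 1 / σ n := by positivity
      calc (σ (n+1)) ^ 2 = (σ n) ^ 2 * (1 + 1 / σ n) * (1 - SiLU (α n)) := hrec n
        _ ≤ ((σ 0) ^ 2 * Real.exp (T n)) * Real.exp (1 / σ n) *
              Real.exp (Real.log (1 - SiLU (α n))) := by
            rw [← h2]
            apply mul_le_mul _ le_rfl hβn.le (by positivity)
            exact mul_le_mul ih h1 hpos.le (by positivity)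
        _ = (σ 0) ^ 2 * Real.exp (T (n+1)) := by
            rw [hTn, Real.exp_add, Real.exp_add]; ring
  intro ℓ
  have hσℓ := hσ ℓ
  have hσ0 := hσ 0
  have hle : σ ℓ ≤ σ 0 * Real.exp (T ℓ / 2) := by
    have he : Real.exp (T ℓ / 2) ^ 2 = Real.exp (T ℓ) := by
      rw [sq, ← Real.exp_add, add_halves]
    have hsq : (σ ℓ) ^ 2 ≤ (σ 0 * Real.exp (T ℓ / 2)) ^ 2 := by
      rw [mul_pow, he]; exact key ℓ
    have hpos2 : (0:ℝ) < σ 0 * Real.exp (T ℓ / 2) := by positivity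
    nlinarith [hsq, hpos2, hσℓ]
  have h := one_div_le_one_div_of_le hσℓ hle
  have heq : (1 / σ 0) * Real.exp (-(T ℓ) / 2) = 1 / (σ 0 * Real.exp (T ℓ / 2)) := by
    rw [neg_div, Real.exp_neg]
    field_simp
  rw [ge_iff_le, heq]
  exact h
end

section
/- Let σ > 0, A ≥ 0, B ≥ 0, real constants M and C, and a natural number L ≥ 1. Then ∏_{ℓ=1}^{L−1} ( 1 + (A/σ)·exp(−((ℓ−1)/σ + M + C)/2) + (B/σ²)·exp(−((ℓ−1)/σ + M + C)) ) ≤ exp( 2·(A/σ)·e^{−(M+C)/2}·min(L, 1 + 2σ) + 2·(B/σ²)·e^{−(M+C)}·min(L, 1 + σ) ). In particular, the upper bound on the gradient-norm product grows at most like exp( O( e^{−M/2} · min{L, σ}/σ ) ), which is the upper bound asserted in Theorem 1. -/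
/-!
Each factor is `1 + x_ℓ` with `x_ℓ ≥ 0`, so the product is at most `exp (∑ x_ℓ)`. After pulling out
the layer-independent constants, `x_ℓ` is a combination of the geometric sequences
`exp (-ℓ / (2σ))` and `exp (-ℓ / σ)`. A geometric sequence `exp (-ℓ / t)` has partial sums bounded both
by the number of terms and by `(1 - exp (-1 / t))⁻¹ ≤ 1 + t`, the latter from `1 + 1 / t ≤ exp (1 / t)`.
-/

open Finset Real

lemma Real.inv_one_sub_exp_neg_inv_le {t : ℝ} (ht : 0 < t) : (1 - exp (-t⁻¹))⁻¹ ≤ 1 + t := by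
  have hexp : exp (-t⁻¹) ≤ t / (1 + t) :=
    calc exp (-t⁻¹) = (exp t⁻¹)⁻¹ := exp_neg _
      _ ≤ (1 + t⁻¹)⁻¹ := inv_anti₀ (by positivity) (by linarith [add_one_le_exp t⁻¹])
      _ = t / (1 + t) := by field_simp; ring
  have hgap : (1 + t)⁻¹ ≤ 1 - exp (-t⁻¹) := by
    have : 1 - t / (1 + t) = (1 + t)⁻¹ := by field_simp; ring
    linarith
  simpa using inv_anti₀ (by positivity) hgap

lemma Real.sum_range_exp_neg_div_le_min {t : ℝ} (ht : 0 < t) (n : ℕ) :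
    ∑ i ∈ range n, exp (-(i : ℝ) / t) ≤ min (n : ℝ) (1 + t) := by
  refine le_min ?_ ?_
  · calc ∑ i ∈ range n, exp (-(i : ℝ) / t) ≤ ∑ _i ∈ range n, (1 : ℝ) :=
          sum_le_sum fun i _ => exp_le_one_iff.mpr (div_nonpos_of_nonpos_of_nonneg
            (neg_nonpos.mpr i.cast_nonneg) ht.le)
      _ = n := by simp
  · have hpow : ∀ i : ℕ, exp (-(i : ℝ) / t) = exp (-t⁻¹) ^ i := fun i => by
      rw [← exp_nat_mul]; ring_nf
    have hr : exp (-t⁻¹) < 1 := exp_lt_one_iff.mpr (by simpa using ht)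
    simp only [hpow]
    have hgeom := geom_sum_Ico_le_of_lt_one (m := 0) (n := n) (exp_pos _).le hr
    rw [← range_eq_Ico, pow_zero, one_div] at hgeom
    exact hgeom.trans (inv_one_sub_exp_neg_inv_le ht)

theorem gpas_gradient_product_upper_bound_min_general
    (σ A B M C : ℝ) (hσ : 0 < σ) (hA : 0 ≤ A) (hB : 0 ≤ B)
    (L : ℕ) :
    ∏ i ∈ Finset.range (L - 1),
        (1 + (A / σ) * Real.exp (-(((i : ℝ)) / σ + M + C) / 2) +
          (B / σ ^ 2) * Real.exp (-((i : ℝ) / σ + M + C))) ≤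
      Real.exp
        (2 * (A / σ) * Real.exp (-(M + C) / 2) * min (L : ℝ) (1 + 2 * σ) +
          2 * (B / σ ^ 2) * Real.exp (-(M + C)) * min (L : ℝ) (1 + σ)) := by
  have hsum : ∀ t : ℝ, 0 < t →
      ∑ i ∈ range (L - 1), exp (-(i : ℝ) / t) ≤ min (L : ℝ) (1 + t) := fun t ht =>
    (sum_range_exp_neg_div_le_min ht (L - 1)).trans
      (min_le_min_right _ (by exact_mod_cast Nat.sub_le L 1))
  have hmin : ∀ t : ℝ, 0 < t → 0 ≤ min (L : ℝ) (1 + t) := fun t ht =>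
    le_min L.cast_nonneg (by linarith)
  have hK₁ : 0 ≤ A / σ * exp (-(M + C) / 2) := by positivity
  have hK₂ : 0 ≤ B / σ ^ 2 * exp (-(M + C)) := by positivity
  calc _ = ∏ i ∈ range (L - 1),
        (1 + (A / σ * exp (-(M + C) / 2) * exp (-(i : ℝ) / (2 * σ)) +
          B / σ ^ 2 * exp (-(M + C)) * exp (-(i : ℝ) / σ))) := by
        refine prod_congr rfl fun i _ => ?_
        rw [mul_assoc, ← exp_add, mul_assoc, ← exp_add]
        ring_nf
    _ ≤ exp (A / σ * exp (-(M + C) / 2) * ∑ i ∈ range (L - 1), exp (-(i : ℝ) / (2 * σ)) +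
          B / σ ^ 2 * exp (-(M + C)) * ∑ i ∈ range (L - 1), exp (-(i : ℝ) / σ)) := by
        rw [mul_sum, mul_sum, ← sum_add_distrib]
        exact prod_one_add_le_exp_sum _ fun i => by positivity
    _ ≤ _ := by
        gcongr exp ?_
        linarith [mul_le_mul_of_nonneg_left (hsum (2 * σ) (by positivity)) hK₁,
          mul_le_mul_of_nonneg_left (hsum σ hσ) hK₂,
          mul_nonneg hK₁ (hmin (2 * σ) (by positivity)), mul_nonneg hK₂ (hmin σ hσ)]

/-- Constant-variance gradient-norm upper bound for Pre-LN with GPAS,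
combined with the geometric-ratio estimate: the product over layers `ℓ = 1, …, L−1`
(index `i = ℓ − 1` below) grows at most like `exp(O(e^{−M/2} · min{L, σ}/σ))`. -/
theorem gpas_gradient_product_upper_bound_min
    (σ A B M C : ℝ) (hσ : 0 < σ) (hA : 0 ≤ A) (hB : 0 ≤ B)
    (L : ℕ) (hL : 1 ≤ L) :
    ∏ i ∈ Finset.range (L - 1),
        (1 + (A / σ) * Real.exp (-(((i : ℝ)) / σ + M + C) / 2) +
          (B / σ ^ 2) * Real.exp (-((i : ℝ) / σ + M + C))) ≤
      Real.exp
        (2 * (A / σ) * Real.exp (-(M + C) / 2) * min (L : ℝ) (1 + 2 * σ) +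
          2 * (B / σ ^ 2) * Real.exp (-(M + C)) * min (L : ℝ) (1 + σ)) :=
  gpas_gradient_product_upper_bound_min_general σ A B M C hσ hA hB L
end

section
/- Let σ > 0, A ≥ 0, B ≥ 0, D > 0, C ∈ ℝ. Suppose that for every s ≥ 0, a_s := (A/σ)·exp(−(s·D + C)/2) + (B/σ²)·exp(−(s·D + C)) ≤ 1. Then for every natural number L ≥ 1, ∏_{s=0}^{L−2} (1 + a_s) ≥ exp( (log 2) · ∑_{s=0}^{L−2} a_s ) = exp( (log 2) · [ (A/σ)·e^{−C/2}·(1 − e^{−(L−1)D/2})/(1 − e^{−D/2}) + (B/σ²)·e^{−C}·(1 − e^{−(L−1)D})/(1 − e^{−D}) ] ). -/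
lemma exp_log_two_mul_le {a : ℝ} (h0 : 0 ≤ a) (h1 : a ≤ 1) :
    Real.exp (Real.log 2 * a) ≤ 1 + a := by
  have hc := convexOn_exp.2 (Set.mem_univ (0:ℝ)) (Set.mem_univ (Real.log 2))
    (by linarith : (0:ℝ) ≤ 1 - a) h0 (by ring)
  simp only [smul_eq_mul, mul_zero, zero_add, Real.exp_zero,
    Real.exp_log (by norm_num : (0:ℝ) < 2)] at hc
  calc Real.exp (Real.log 2 * a) = Real.exp (a * Real.log 2) := by ring_nf
    _ ≤ (1 - a) * 1 + a * 2 := hc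
    _ = 1 + a := by ring

lemma geom_closed (r : ℝ) (hr : r ≠ 1) (n : ℕ) :
    ∑ s ∈ Finset.range n, r ^ s = (1 - r ^ n) / (1 - r) := by
  rw [geom_sum_eq hr]
  rw [div_eq_div_iff (sub_ne_zero.mpr hr) (sub_ne_zero.mpr (Ne.symm hr))]
  ring

/-- Exponential form of the lower bound for the gradient-norm product of
Pre-LN with GPAS: if each per-layer term `a_s ≤ 1`, then
`∏_{s=0}^{L−2} (1 + a_s) ≥ exp((log 2) ∑_{s=0}^{L−2} a_s)`, and the sum has the closed
geometric form. -/
theorem gpas_gradient_product_exp_lower_bound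
    (σ A B D C : ℝ) (hσ : 0 < σ) (hA : 0 ≤ A) (hB : 0 ≤ B) (hD : 0 < D)
    (ha : ∀ s : ℕ,
      (A / σ) * Real.exp (-((s : ℝ) * D + C) / 2) +
        (B / σ ^ 2) * Real.exp (-((s : ℝ) * D + C)) ≤ 1)
    (L : ℕ) (hL : 1 ≤ L) :
    (∏ s ∈ Finset.range (L - 1),
        (1 + ((A / σ) * Real.exp (-((s : ℝ) * D + C) / 2) +
          (B / σ ^ 2) * Real.exp (-((s : ℝ) * D + C)))) ≥
      Real.exp (Real.log 2 *
        ∑ s ∈ Finset.range (L - 1),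
          ((A / σ) * Real.exp (-((s : ℝ) * D + C) / 2) +
            (B / σ ^ 2) * Real.exp (-((s : ℝ) * D + C))))) ∧
      ∑ s ∈ Finset.range (L - 1),
          ((A / σ) * Real.exp (-((s : ℝ) * D + C) / 2) +
            (B / σ ^ 2) * Real.exp (-((s : ℝ) * D + C))) =
        (A / σ) * Real.exp (-C / 2) *
            ((1 - Real.exp (-((L : ℝ) - 1) * D / 2)) / (1 - Real.exp (-D / 2))) +
          (B / σ ^ 2) * Real.exp (-C) *
            ((1 - Real.exp (-((L : ℝ) - 1) * D)) / (1 - Real.exp (-D))) := by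
  set a : ℕ → ℝ := fun s => (A / σ) * Real.exp (-((s : ℝ) * D + C) / 2) +
      (B / σ ^ 2) * Real.exp (-((s : ℝ) * D + C)) with ha_def
  have hanneg : ∀ s, 0 ≤ a s := fun s => by
    have := Real.exp_pos (-((s : ℝ) * D + C) / 2)
    have := Real.exp_pos (-((s : ℝ) * D + C))
    have h1 : 0 ≤ A / σ := div_nonneg hA hσ.le
    have h2 : 0 ≤ B / σ ^ 2 := div_nonneg hB (by positivity)
    positivity
  constructor
  · rw [Finset.mul_sum, Real.exp_sum]
    exact Finset.prod_le_prod (fun s _ => (Real.exp_pos _).le)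
      (fun s _ => exp_log_two_mul_le (hanneg s) (ha s))
  · have hterm : ∀ s : ℕ, a s =
        (A / σ) * Real.exp (-C / 2) * (Real.exp (-D / 2)) ^ s +
        (B / σ ^ 2) * Real.exp (-C) * (Real.exp (-D)) ^ s := by
      intro s
      simp only [ha_def]
      have e1 : Real.exp (-((s : ℝ) * D + C) / 2)
          = Real.exp (-C / 2) * (Real.exp (-D / 2)) ^ s := by
        rw [← Real.exp_nat_mul, ← Real.exp_add]; ring_nf
      have e2 : Real.exp (-((s : ℝ) * D + C))
          = Real.exp (-C) * (Real.exp (-D)) ^ s := by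
        rw [← Real.exp_nat_mul, ← Real.exp_add]; ring_nf
      rw [e1, e2]; ring
    have hr1 : Real.exp (-D / 2) ≠ 1 := by
      have : Real.exp (-D / 2) < Real.exp 0 := Real.exp_lt_exp.mpr (by linarith)
      rw [Real.exp_zero] at this; exact this.ne
    have hr2 : Real.exp (-D) ≠ 1 := by
      have : Real.exp (-D) < Real.exp 0 := Real.exp_lt_exp.mpr (by linarith)
      rw [Real.exp_zero] at this; exact this.ne
    have hcast : ((L - 1 : ℕ) : ℝ) = (L : ℝ) - 1 := by
      have := Nat.cast_sub hL (R := ℝ); simpa using this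
    have hp1 : (Real.exp (-D / 2)) ^ (L - 1) = Real.exp (-((L : ℝ) - 1) * D / 2) := by
      rw [← Real.exp_nat_mul, hcast]; ring_nf
    have hp2 : (Real.exp (-D)) ^ (L - 1) = Real.exp (-((L : ℝ) - 1) * D) := by
      rw [← Real.exp_nat_mul, hcast]; ring_nf
    calc ∑ s ∈ Finset.range (L - 1), a s
        = ∑ s ∈ Finset.range (L - 1),
            ((A / σ) * Real.exp (-C / 2) * (Real.exp (-D / 2)) ^ s +
             (B / σ ^ 2) * Real.exp (-C) * (Real.exp (-D)) ^ s) :=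
          Finset.sum_congr rfl (fun s _ => hterm s)
      _ = (A / σ) * Real.exp (-C / 2) * ∑ s ∈ Finset.range (L - 1), (Real.exp (-D / 2)) ^ s +
          (B / σ ^ 2) * Real.exp (-C) * ∑ s ∈ Finset.range (L - 1), (Real.exp (-D)) ^ s := by
          rw [Finset.sum_add_distrib, Finset.mul_sum, Finset.mul_sum]
      _ = _ := by rw [geom_closed _ hr1, geom_closed _ hr2, hp1, hp2]
end

section
/- Let σ > 0, A ≥ 0, B ≥ 0, D > 0, C ∈ ℝ. Then for every natural number L ≥ 1, the gradient-norm product is bounded uniformly in the depth L: ∏_{s=0}^{L−2} ( 1 + (A/σ)·exp(−(s·D + C)/2) + (B/σ²)·exp(−(s·D + C)) ) ≤ exp( (A/σ)·e^{−C/2} / (1 − e^{−D/2}) + (B/σ²)·e^{−C} / (1 − e^{−D}) ). -/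
lemma geo_sum_le (r : ℝ) (h0 : 0 ≤ r) (h1 : r < 1) (n : ℕ) :
    ∑ s ∈ Finset.range n, r ^ s ≤ 1 / (1 - r) := by
  have hr : 0 < 1 - r := by linarith
  rw [geom_sum_eq h1.ne n,
    show (r ^ n - 1) / (r - 1) = (1 - r ^ n) / (1 - r) by
      rw [← neg_div_neg_eq]; ring_nf]
  rw [div_le_div_iff₀ hr hr]
  have : 0 ≤ r ^ n := pow_nonneg h0 n
  nlinarith

/-- Depth-independent ceiling on the gradient-norm product of Pre-LN with
GPAS: with constant per-layer decrement `D > 0`, the product over `s = 0, …, L−2` is bounded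
uniformly in the depth `L`. -/
theorem gpas_gradient_product_uniform_bound
    (σ A B D C : ℝ) (hσ : 0 < σ) (hA : 0 ≤ A) (hB : 0 ≤ B) (hD : 0 < D)
    (L : ℕ) (hL : 1 ≤ L) :
    ∏ s ∈ Finset.range (L - 1),
        (1 + (A / σ) * Real.exp (-((s : ℝ) * D + C) / 2) +
          (B / σ ^ 2) * Real.exp (-((s : ℝ) * D + C))) ≤
      Real.exp
        ((A / σ) * Real.exp (-C / 2) / (1 - Real.exp (-D / 2)) +
          (B / σ ^ 2) * Real.exp (-C) / (1 - Real.exp (-D))) := by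
  set n := L - 1
  have hAσ : 0 ≤ A / σ := div_nonneg hA hσ.le
  have hBσ : 0 ≤ B / σ ^ 2 := div_nonneg hB (by positivity)
  -- each term a_s
  set a : ℕ → ℝ := fun s =>
    (A / σ) * Real.exp (-((s : ℝ) * D + C) / 2) +
      (B / σ ^ 2) * Real.exp (-((s : ℝ) * D + C)) with ha
  have hanonneg : ∀ s, 0 ≤ a s := fun s => by positivity
  have step1 : ∏ s ∈ Finset.range n, (1 + (A / σ) * Real.exp (-((s : ℝ) * D + C) / 2) +
      (B / σ ^ 2) * Real.exp (-((s : ℝ) * D + C))) ≤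
      Real.exp (∑ s ∈ Finset.range n, a s) := by
    rw [Real.exp_sum]
    apply Finset.prod_le_prod
    · intro s _
      have := hanonneg s
      simp only [ha] at this
      linarith
    · intro s _
      have h := Real.add_one_le_exp (a s)
      simp only [ha] at h ⊢
      linarith
  refine step1.trans (Real.exp_le_exp.mpr ?_)
  -- bound the sum
  have hr1 : Real.exp (-D / 2) < 1 := Real.exp_lt_one_iff.mpr (by linarith)
  have hr2 : Real.exp (-D) < 1 := Real.exp_lt_one_iff.mpr (by linarith)
  have hrw : ∀ s : ℕ, a s = (A / σ) * Real.exp (-C / 2) * (Real.exp (-D / 2)) ^ s +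
      (B / σ ^ 2) * Real.exp (-C) * (Real.exp (-D)) ^ s := by
    intro s
    simp only [ha]
    rw [show -((s:ℝ) * D + C) / 2 = (s:ℝ) * (-D/2) + (-C/2) by ring,
      show -((s:ℝ) * D + C) = (s:ℝ) * (-D) + (-C) by ring,
      Real.exp_add, Real.exp_add, Real.exp_nat_mul, Real.exp_nat_mul]
    ring
  calc ∑ s ∈ Finset.range n, a s
      = (A / σ) * Real.exp (-C / 2) * (∑ s ∈ Finset.range n, (Real.exp (-D / 2)) ^ s) +
        (B / σ ^ 2) * Real.exp (-C) * (∑ s ∈ Finset.range n, (Real.exp (-D)) ^ s) := by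
        simp only [hrw]
        rw [Finset.sum_add_distrib, ← Finset.mul_sum, ← Finset.mul_sum]
    _ ≤ (A / σ) * Real.exp (-C / 2) * (1 / (1 - Real.exp (-D / 2))) +
        (B / σ ^ 2) * Real.exp (-C) * (1 / (1 - Real.exp (-D))) := by
        gcongr
        · exact geo_sum_le _ (Real.exp_nonneg _) hr1 n
        · exact geo_sum_le _ (Real.exp_nonneg _) hr2 n
    _ = (A / σ) * Real.exp (-C / 2) / (1 - Real.exp (-D / 2)) +
        (B / σ ^ 2) * Real.exp (-C) / (1 - Real.exp (-D)) := by ring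
end
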